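/- arXiv:2104.04094 — 2 statements merged into one kernel-verified Lean document; each statement's English description precedes it below -/
import Mathlib

section
/- If x⃗ ∈ L satisfies 0 ≤ x⃗ ≤ δ⃗, then x⃗ − w⃗ ≱ 0 and w⃗ − x⃗ ≱ 0. -/
open scoped BigOperators

namespace WPL

/-- The rank-one abelian group `L(p₁,…,p_t)`: the quotient of `ℤ^t` by the
subgroup generated by the elements `p 0 • e 0 - p i • e i`. -/
def rel (t : ℕ) [NeZero t] (p : Fin t → ℕ) : Submodule ℤ (Fin t → ℤ) :=
  Submodule.span ℤ
    { v | ∃ i : Fin t, v = (p 0 : ℤ) • Pi.single (0 : Fin t) (1 : ℤ) - (p i : ℤ) • Pi.single i (1 : ℤ) }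

/-- The group `L(p₁,…,p_t)`. -/
abbrev L (t : ℕ) [NeZero t] (p : Fin t → ℕ) : Type :=
  (Fin t → ℤ) ⧸ rel t p

/-- The generator `x⃗ᵢ` of `L`. -/
def xg (t : ℕ) [NeZero t] (p : Fin t → ℕ) (i : Fin t) : L t p :=
  Submodule.Quotient.mk (Pi.single i (1 : ℤ))

/-- The canonical element `c⃗ = p₁ • x⃗₁`. -/
noncomputable def cg (t : ℕ) [NeZero t] (p : Fin t → ℕ) : L t p :=
  (p 0 : ℤ) • xg t p 0

/-- `y ∈ L_+`, i.e. `y ≥ 0`: `y` is an ℕ-linear combination of the `x⃗ᵢ`. -/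
def pos (t : ℕ) [NeZero t] (p : Fin t → ℕ) (y : L t p) : Prop :=
  ∃ a : Fin t → ℕ, y = ∑ i, (a i : ℤ) • xg t p i

/-- The dualizing element `w⃗ = (t-2) • c⃗ - ∑ x⃗ᵢ`. -/
noncomputable def wg (t : ℕ) [NeZero t] (p : Fin t → ℕ) : L t p :=
  ((t : ℤ) - 2) • cg t p - ∑ i, xg t p i

/-- The dominant element `δ⃗ = c⃗ + 2 • w⃗`. -/
noncomputable def dg (t : ℕ) [NeZero t] (p : Fin t → ℕ) : L t p :=
  cg t p + 2 • wg t p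

end WPL

/-!
The degree map `L → ℚ`, `x⃗ᵢ ↦ 1/pᵢ`, and the maps `L → ℤ/pⱼ` reading off the `j`-th coordinate
show that a relation `∑ nᵢ x⃗ᵢ = m c⃗` with all `nᵢ ≥ 1` forces `pᵢ ∣ nᵢ` for every `i`, hence
`m = ∑ nᵢ/pᵢ ≥ t`. Since `w⃗ + ∑ x⃗ᵢ = (t-2) c⃗` and `(c⃗ + w⃗) + ∑ x⃗ᵢ = (t-1) c⃗`, neither `w⃗` nor
`c⃗ + w⃗` is `≥ 0`. But `w⃗ - x⃗ ≥ 0` and `x⃗ ≥ 0` would give `w⃗ ≥ 0`, while `x⃗ - w⃗ ≥ 0` and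
`δ⃗ - x⃗ ≥ 0` would give `δ⃗ - w⃗ = c⃗ + w⃗ ≥ 0`.
-/

namespace WPL

variable {t : ℕ} [NeZero t] {p : Fin t → ℕ}

theorem rel_le_ker_iff {M : Type*} [AddCommGroup M] (f : (Fin t → ℤ) →ₗ[ℤ] M) :
    rel t p ≤ LinearMap.ker f ↔
      ∀ i, (p 0 : ℤ) • f (Pi.single 0 1) = (p i : ℤ) • f (Pi.single i 1) := by
  simp only [rel, Submodule.span_le, Set.subset_def, Set.mem_ofPred_eq, forall_exists_index,
    forall_eq_apply_imp_iff, SetLike.mem_coe, LinearMap.mem_ker, map_sub, map_zsmul, sub_eq_zero]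

def liftL {M : Type*} [AddCommGroup M] (f : (Fin t → ℤ) →ₗ[ℤ] M)
    (hf : ∀ i, (p 0 : ℤ) • f (Pi.single 0 1) = (p i : ℤ) • f (Pi.single i 1)) :
    L t p →ₗ[ℤ] M :=
  (rel t p).liftQ f ((rel_le_ker_iff f).2 hf)

theorem liftL_xg {M : Type*} [AddCommGroup M] (f : (Fin t → ℤ) →ₗ[ℤ] M)
    (hf : ∀ i, (p 0 : ℤ) • f (Pi.single 0 1) = (p i : ℤ) • f (Pi.single i 1)) (i : Fin t) :
    liftL f hf (xg t p i) = f (Pi.single i 1) :=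
  Submodule.liftQ_apply _ _ _

noncomputable def degree (hp : ∀ i, p i ≠ 0) : L t p →ₗ[ℤ] ℚ :=
  liftL (Fintype.linearCombination ℤ fun i => ((p i : ℚ))⁻¹) fun i => by
    simp [Fintype.linearCombination_apply_single, hp]

theorem degree_xg (hp : ∀ i, p i ≠ 0) (i : Fin t) : degree hp (xg t p i) = ((p i : ℚ))⁻¹ := by
  simp [degree, liftL_xg, Fintype.linearCombination_apply_single]

theorem degree_cg (hp : ∀ i, p i ≠ 0) : degree hp (cg t p) = 1 := by
  simp [cg, degree_xg, hp]

noncomputable def coordMod (j : Fin t) : L t p →ₗ[ℤ] ZMod (p j) :=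
  liftL ((Int.castAddHom (ZMod (p j))).toIntLinearMap ∘ₗ LinearMap.proj j) fun i => by
    have key : ∀ k, (p k : ℤ) • ((Pi.single k 1 : Fin t → ℤ) j : ZMod (p j)) = 0 := by
      intro k
      rcases eq_or_ne j k with rfl | hjk
      · simp
      · simp [hjk]
    simp [key]

theorem coordMod_xg (i j : Fin t) :
    coordMod j (xg t p i) = ((Pi.single i 1 : Fin t → ℤ) j : ZMod (p j)) :=
  liftL_xg _ _ i

theorem coordMod_cg (j : Fin t) : coordMod j (cg t p) = 0 := by
  rcases eq_or_ne j 0 with rfl | hj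
  · simp [cg, coordMod_xg]
  · simp [cg, coordMod_xg, hj]

theorem coordMod_sum_smul_xg (n : Fin t → ℤ) (j : Fin t) :
    coordMod j (∑ i, n i • xg t p i) = n j := by
  simp [coordMod_xg, Pi.single_apply]

theorem degree_sum_smul_xg (hp : ∀ i, p i ≠ 0) (n : Fin t → ℤ) :
    degree hp (∑ i, n i • xg t p i) = ∑ i, (n i : ℚ) / p i := by
  simp [degree_xg, div_eq_mul_inv]

theorem dvd_of_sum_smul_xg_eq_zsmul_cg {n : Fin t → ℤ} {m : ℤ}
    (h : ∑ i, n i • xg t p i = m • cg t p) (j : Fin t) : (p j : ℤ) ∣ n j := by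
  have hj := congrArg (coordMod j) h
  rw [coordMod_sum_smul_xg, map_zsmul, coordMod_cg, smul_zero] at hj
  exact (ZMod.intCast_zmod_eq_zero_iff_dvd _ _).1 hj

theorem card_le_of_sum_smul_xg_eq_zsmul_cg (hp : ∀ i, p i ≠ 0) {n : Fin t → ℤ} {m : ℤ}
    (hn : ∀ i, 0 < n i) (h : ∑ i, n i • xg t p i = m • cg t p) : (t : ℤ) ≤ m := by
  choose k hk using dvd_of_sum_smul_xg_eq_zsmul_cg h
  have hk_pos : ∀ i, 0 < k i := fun i =>
    pos_of_mul_pos_right (hk i ▸ hn i) (Int.natCast_nonneg _)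
  have hdeg : ∑ i, (k i : ℚ) = m := by
    have := congrArg (degree hp) h
    rw [degree_sum_smul_xg, map_zsmul, degree_cg] at this
    simpa [hk, mul_div_cancel_left₀, hp] using this
  have hsum : (t : ℤ) ≤ ∑ i, k i := by
    simpa using Finset.card_nsmul_le_sum Finset.univ k 1 fun i _ => hk_pos i
  exact hsum.trans_eq (by exact_mod_cast hdeg)

theorem pos_add {y z : L t p} : pos t p y → pos t p z → pos t p (y + z) := by
  rintro ⟨a, rfl⟩ ⟨b, rfl⟩
  exact ⟨a + b, by simp [add_smul, Finset.sum_add_distrib]⟩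

theorem not_pos_of_add_sum_xg_eq_zsmul_cg (hp : ∀ i, p i ≠ 0) {y : L t p} {m : ℤ}
    (hm : m < t) (h : y + ∑ i, xg t p i = m • cg t p) : ¬ pos t p y := by
  rintro ⟨a, rfl⟩
  refine hm.not_ge (card_le_of_sum_smul_xg_eq_zsmul_cg hp (n := fun i => a i + 1)
    (fun i => by positivity) ?_)
  simpa [add_smul, Finset.sum_add_distrib] using h

theorem not_pos_zsmul_cg_add_wg (hp : ∀ i, p i ≠ 0) {m : ℤ} (hm : m < 2) :
    ¬ pos t p (m • cg t p + wg t p) :=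
  not_pos_of_add_sum_xg_eq_zsmul_cg hp (m := m + t - 2) (by omega) (by rw [wg]; module)

end WPL

open WPL in
theorem not_pos_sub_w_of_le_delta_general
    (t : ℕ) [NeZero t] (p : Fin t → ℕ) (hp : ∀ i, 2 ≤ p i)
    (x : L t p) (hx : pos t p x) (hxd : pos t p (dg t p - x)) :
    ¬ pos t p (x - wg t p) ∧ ¬ pos t p (wg t p - x) := by
  have hp0 : ∀ i, p i ≠ 0 := fun i => by have := hp i; omega
  constructor
  · intro hxw
    refine not_pos_zsmul_cg_add_wg hp0 (m := 1) one_lt_two ?_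
    convert pos_add hxw hxd using 1
    rw [dg]
    module
  · intro hwx
    refine not_pos_zsmul_cg_add_wg hp0 (m := 0) two_pos ?_
    simpa using pos_add hwx hx

open WPL in
/-- if `0 ≤ x⃗ ≤ δ⃗` then `x⃗ - w⃗ ≱ 0` and `w⃗ - x⃗ ≱ 0`. -/
theorem not_pos_sub_w_of_le_delta
    (t : ℕ) [NeZero t] (ht : 3 ≤ t) (p : Fin t → ℕ) (hp : ∀ i, 2 ≤ p i)
    (x : L t p) (hx : pos t p x) (hxd : pos t p (dg t p - x)) :
    ¬ pos t p (x - wg t p) ∧ ¬ pos t p (wg t p - x) :=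
  not_pos_sub_w_of_le_delta_general t p hp x hx hxd
end

section
/- With notation as follows: y⃗ ∈ L with normal form y⃗ = n·c⃗ + Σ_{i=1}^t a_i·x⃗_i, I ⊆ {1,…,t} with #I = 3, x⃗ = Σ_{i∈I} l_i·x⃗_i + Σ_{j∉I} (p_j−1)·x⃗_j with 0 ≤ l_i ≤ p_i−2 for i ∈ I, and m_I := #{i ∈ I : a_i + l_i ≥ p_i}. If y⃗ + x⃗ ≥ 0, y⃗ + x⃗ − c⃗ ≱ 0, and y⃗ + w⃗ ≥ 0, then m_I + #{i ∈ I : a_i = 0} ≤ 1; in particular m_I ∈ {0, 1}, if m_I = 1 then a_i > 0 for all i ∈ I, and if m_I = 0 then at most one index i ∈ I has a_i = 0. -/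
open scoped BigOperators

namespace WPLAux

open WPL Finset

variable (t : ℕ) [NeZero t] (p : Fin t → ℕ)

/-- relation `pᵢ • xᵢ = c` -/
lemma p_smul_x (i : Fin t) : (p i : ℤ) • xg t p i = cg t p := by
  unfold cg xg
  rw [← Submodule.Quotient.mk_smul, ← Submodule.Quotient.mk_smul, eq_comm, ← sub_eq_zero,
      ← Submodule.Quotient.mk_sub, Submodule.Quotient.mk_eq_zero]
  exact Submodule.subset_span ⟨i, rfl⟩

/-- normal-form element -/
noncomputable def nf (n : ℤ) (a : Fin t → ℤ) : L t p :=
  n • cg t p + ∑ i, a i • xg t p i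

lemma nf_add (n m : ℤ) (a b : Fin t → ℤ) :
    nf t p n a + nf t p m b = nf t p (n + m) (a + b) := by
  unfold nf
  simp only [Pi.add_apply, add_smul, Finset.sum_add_distrib]
  abel

lemma nf_sub_cg (n : ℤ) (a : Fin t → ℤ) :
    nf t p n a - cg t p = nf t p (n - 1) a := by
  unfold nf
  rw [sub_smul, one_smul]
  abel

lemma nf_carry (n : ℤ) (a k : Fin t → ℤ) :
    nf t p (n + ∑ i, k i) (fun i => a i - (p i : ℤ) * k i) = nf t p n a := by
  unfold nf
  have h : ∀ i, (a i - (p i : ℤ) * k i) • xg t p i = a i • xg t p i - k i • cg t p := by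
    intro i
    rw [sub_smul, mul_comm, mul_smul, p_smul_x]
  simp_rw [h]
  rw [Finset.sum_sub_distrib, add_smul, ← Finset.sum_smul]
  abel

end WPLAux

namespace WPLAux
open WPL Finset

variable (t : ℕ) [NeZero t] (p : Fin t → ℕ)

/-- auxiliary product `Qᵢ = ∏_{j≠i} pⱼ` -/
def Q (i : Fin t) : ℤ := ∏ j ∈ univ.erase i, (p j : ℤ)

def P : ℤ := ∏ j, (p j : ℤ)

lemma p_mul_Q (i : Fin t) : (p i : ℤ) * Q t p i = P t p := by
  unfold Q P
  exact Finset.mul_prod_erase univ (fun j => (p j : ℤ)) (mem_univ i)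

/-- the degree functional on `ℤ^t` -/
def phi : (Fin t → ℤ) →ₗ[ℤ] ℤ :=
  ∑ i, Q t p i • (LinearMap.proj i : (Fin t → ℤ) →ₗ[ℤ] ℤ)

lemma phi_apply (v : Fin t → ℤ) : phi t p v = ∑ i, Q t p i * v i := by
  simp [phi, LinearMap.sum_apply]

lemma phi_single (j : Fin t) : phi t p (Pi.single j (1 : ℤ)) = Q t p j := by
  rw [phi_apply]
  rw [Finset.sum_eq_single j]
  · simp
  · intro b _ hb; simp [Pi.single_apply, Ne.symm hb]
  · simp

lemma phi_rel : rel t p ≤ LinearMap.ker (phi t p) := by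
  rw [rel, Submodule.span_le]
  rintro v ⟨i, rfl⟩
  simp only [SetLike.mem_coe, LinearMap.mem_ker, map_sub, map_smul, phi_single,
    smul_eq_mul, p_mul_Q, sub_self]

/-- degree functional on `L` -/
def Phi : L t p →ₗ[ℤ] ℤ := Submodule.liftQ (rel t p) (phi t p) (phi_rel t p)

lemma Phi_xg (j : Fin t) : Phi t p (xg t p j) = Q t p j := phi_single t p j

lemma Phi_cg : Phi t p (cg t p) = P t p := by
  rw [cg, map_smul, Phi_xg, smul_eq_mul, p_mul_Q]

/-- the mod-`pᵢ` coordinate functional -/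
def psi (i : Fin t) : (Fin t → ℤ) →ₗ[ℤ] ZMod (p i) :=
  (Int.castAddHom (ZMod (p i))).toIntLinearMap ∘ₗ (LinearMap.proj i)

lemma psi_apply (i : Fin t) (v : Fin t → ℤ) : psi t p i v = ((v i : ℤ) : ZMod (p i)) := rfl

lemma psi_rel (i : Fin t) : rel t p ≤ LinearMap.ker (psi t p i) := by
  rw [rel, Submodule.span_le]
  rintro v ⟨j, rfl⟩
  simp only [SetLike.mem_coe, LinearMap.mem_ker, psi_apply, Pi.sub_apply, Pi.smul_apply,
    Pi.single_apply, smul_eq_mul, mul_ite, mul_one, mul_zero]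
  push_cast
  split_ifs with h0 hj hj
  · subst h0; subst hj; simp
  · subst h0; simp [ZMod.natCast_self]
  · subst hj; simp [ZMod.natCast_self]
  · simp

def Psi (i : Fin t) : L t p →ₗ[ℤ] ZMod (p i) :=
  Submodule.liftQ (rel t p) (psi t p i) (psi_rel t p i)

lemma Psi_xg (i j : Fin t) :
    Psi t p i (xg t p j) = if j = i then 1 else 0 := by
  rw [Psi, xg, Submodule.liftQ_apply, psi_apply, Pi.single_apply]
  rcases eq_or_ne j i with h | h
  · subst h; simp
  · simp [h, Ne.symm h]

lemma Psi_cg (i : Fin t) : Psi t p i (cg t p) = 0 := by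
  rw [cg, map_smul, Psi_xg]
  split_ifs with h
  · rw [← h]
    show ((p 0 : ℤ) • (1 : ZMod (p 0)) = 0)
    rw [zsmul_eq_mul, mul_one]
    push_cast
    exact ZMod.natCast_self (p 0)
  · simp

end WPLAux

namespace WPLAux
open WPL Finset

variable (t : ℕ) [NeZero t] (p : Fin t → ℕ)

lemma Phi_nf (n : ℤ) (a : Fin t → ℤ) :
    Phi t p (nf t p n a) = n * P t p + ∑ i, Q t p i * a i := by
  unfold nf
  rw [map_add, map_smul, Phi_cg, map_sum]
  simp_rw [map_smul, Phi_xg, smul_eq_mul]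
  ring_nf
  simp [mul_comm]

lemma Psi_nf (i : Fin t) (n : ℤ) (a : Fin t → ℤ) :
    Psi t p i (nf t p n a) = ((a i : ℤ) : ZMod (p i)) := by
  unfold nf
  rw [map_add, map_smul, Psi_cg, smul_zero, zero_add, map_sum]
  simp_rw [map_smul, Psi_xg, smul_ite, smul_zero]
  rw [Finset.sum_ite_eq' univ i]
  simp [zsmul_eq_mul]

lemma pos_nf_iff (hp : ∀ i, 2 ≤ p i) (n : ℤ) (a : Fin t → ℤ)
    (ha : ∀ i, 0 ≤ a i ∧ a i ≤ (p i : ℤ) - 1) :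
    pos t p (nf t p n a) ↔ 0 ≤ n := by
  constructor
  · rintro ⟨b, hb⟩
    have hb' : nf t p n a = nf t p 0 (fun i => (b i : ℤ)) := by
      rw [hb, nf, zero_smul, zero_add]
    -- mod p_i congruences
    have hdvd : ∀ i, (p i : ℤ) ∣ ((b i : ℤ) - a i) := by
      intro i
      have h1 := congrArg (Psi t p i) hb'
      rw [Psi_nf, Psi_nf] at h1
      rw [← ZMod.intCast_zmod_eq_zero_iff_dvd]
      push_cast
      rw [sub_eq_zero]
      exact_mod_cast h1.symm
    set k : Fin t → ℤ := fun i => ((b i : ℤ) - a i) / (p i : ℤ) with hk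
    have hkey : ∀ i, (b i : ℤ) - a i = (p i : ℤ) * k i := fun i =>
      (Int.mul_ediv_cancel' (hdvd i)).symm
    have hk0 : ∀ i, 0 ≤ k i := by
      intro i
      by_contra h
      push_neg at h
      have h1 : k i ≤ -1 := by omega
      have hpi : (2 : ℤ) ≤ (p i : ℤ) := by exact_mod_cast hp i
      have h2 : (p i : ℤ) * k i ≤ (p i : ℤ) * (-1) :=
        mul_le_mul_of_nonneg_left h1 (by linarith)
      have h3 : (0 : ℤ) ≤ (b i : ℤ) := Int.natCast_nonneg _
      have h4 := (ha i).2
      have h5 := hkey i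
      linarith
    -- degree computation
    have hPhi := congrArg (Phi t p) hb'
    rw [Phi_nf, Phi_nf] at hPhi
    have hP : 0 < P t p := by
      apply Finset.prod_pos
      intro i _
      have := hp i
      positivity
    have hsum : n * P t p = P t p * ∑ i, k i := by
      have e1 : n * P t p = ∑ i, Q t p i * ((b i : ℤ) - a i) := by
        simp_rw [mul_sub, Finset.sum_sub_distrib]
        linarith [hPhi]
      rw [e1]
      simp_rw [hkey]
      rw [Finset.mul_sum]
      refine Finset.sum_congr rfl fun i _ => ?_
      rw [← mul_assoc, mul_comm (Q t p i) ((p i : ℤ)), p_mul_Q]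
    have hn : n = ∑ i, k i := by
      have := hsum
      rw [mul_comm (P t p) _] at this
      exact mul_right_cancel₀ hP.ne' this
    rw [hn]
    exact Finset.sum_nonneg fun i _ => hk0 i
  · intro hn
    refine ⟨fun i => if i = 0 then (a 0 + n * p 0).toNat else (a i).toNat, ?_⟩
    have hb : ∀ i, ((if i = 0 then (a 0 + n * p 0).toNat else (a i).toNat : ℕ) : ℤ)
        = a i + (if i = 0 then n * (p 0 : ℤ) else 0) := by
      intro i
      by_cases h : i = 0
      · subst h
        simp only [if_true, eq_self_iff_true, if_pos]
        rw [Int.toNat_of_nonneg]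
        exact add_nonneg (ha 0).1 (mul_nonneg hn (Int.natCast_nonneg _))
      · simp only [if_neg h, add_zero]
        exact Int.toNat_of_nonneg (ha i).1
    rw [show (∑ i, ((if i = 0 then (a 0 + n * p 0).toNat else (a i).toNat : ℕ) : ℤ) • xg t p i)
        = ∑ i, (a i + (if i = 0 then n * (p 0 : ℤ) else 0)) • xg t p i from
      Finset.sum_congr rfl fun i _ => by rw [hb i]]
    simp_rw [add_smul, Finset.sum_add_distrib, ite_smul, zero_smul]
    rw [Finset.sum_ite_eq' univ (0 : Fin t)]
    simp only [mem_univ, if_pos]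
    rw [mul_smul]
    unfold nf cg
    abel

end WPLAux

open WPLAux Finset


open WPL in
/-- if `y⃗ + x⃗ ≥ 0`, `y⃗ + x⃗ - c⃗ ≱ 0` and `y⃗ + w⃗ ≥ 0`,
then `m_I + #{i ∈ I : aᵢ = 0} ≤ 1`; in particular `m_I ∈ {0,1}`, if `m_I = 1`
then `aᵢ > 0` for all `i ∈ I`, and if `m_I = 0` then at most one `i ∈ I`
has `aᵢ = 0`. -/
theorem case_analysis_mI
    (t : ℕ) [NeZero t] (ht : 3 ≤ t) (p : Fin t → ℕ) (hp : ∀ i, 2 ≤ p i)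
    (n : ℤ) (a : Fin t → ℤ) (ha : ∀ i, 0 ≤ a i ∧ a i ≤ (p i : ℤ) - 1)
    (y : L t p) (hy : y = n • cg t p + ∑ i, a i • xg t p i)
    (I : Finset (Fin t)) (hI : I.card = 3)
    (l : Fin t → ℤ) (hl : ∀ i ∈ I, 0 ≤ l i ∧ l i ≤ (p i : ℤ) - 2)
    (xv : L t p)
    (hxv : xv = ∑ i ∈ I, l i • xg t p i + ∑ j ∈ Iᶜ, ((p j : ℤ) - 1) • xg t p j)
    (mI : ℕ)
    (hmI : mI = (I.filter (fun i => (p i : ℤ) ≤ a i + l i)).card)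
    (h1 : pos t p (y + xv))
    (h2 : ¬ pos t p (y + xv - cg t p))
    (h3 : pos t p (y + wg t p)) :
    mI + (I.filter (fun i => a i = 0)).card ≤ 1 ∧
    mI ≤ 1 ∧
    (mI = 1 → ∀ i ∈ I, 0 < a i) ∧
    (mI = 0 → (I.filter (fun i => a i = 0)).card ≤ 1) := by
  classical
  have hpz : ∀ i, (2 : ℤ) ≤ (p i : ℤ) := fun i => by exact_mod_cast hp i
  have hy' : y = nf t p n a := by rw [hy]; rfl
  -- rewrite xv
  set xf : Fin t → ℤ := fun i => if i ∈ I then l i else (p i : ℤ) - 1 with hxf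
  have hxfI : ∀ i ∈ I, xf i = l i := by
    intro i hi
    show (if i ∈ I then l i else (p i : ℤ) - 1) = l i
    rw [if_pos hi]
  have hxfC : ∀ i ∉ I, xf i = (p i : ℤ) - 1 := by
    intro i hi
    show (if i ∈ I then l i else (p i : ℤ) - 1) = (p i : ℤ) - 1
    rw [if_neg hi]
  have hxv' : xv = nf t p 0 xf := by
    rw [hxv, nf, zero_smul, zero_add, ← Finset.sum_add_sum_compl I]
    congr 1
    · exact Finset.sum_congr rfl fun i hi => by rw [hxfI i hi]
    · exact Finset.sum_congr rfl fun i hi => by rw [hxfC i (Finset.mem_compl.mp hi)]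
  have hyx : y + xv = nf t p n (a + xf) := by
    rw [hy', hxv', nf_add, add_zero]
  -- carry data for y + xv
  set cond : Fin t → Prop :=
    fun i => (i ∈ I ∧ (p i : ℤ) ≤ a i + l i) ∨ (i ∉ I ∧ 1 ≤ a i) with hcond
  set k1 : Fin t → ℤ := fun i => if cond i then 1 else 0 with hk1
  have hk1pos : ∀ i, cond i → k1 i = 1 := by
    intro i hc
    show (if cond i then (1 : ℤ) else 0) = 1
    rw [if_pos hc]
  have hk1neg : ∀ i, ¬ cond i → k1 i = 0 := by
    intro i hc
    show (if cond i then (1 : ℤ) else 0) = 0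
    rw [if_neg hc]
  have hyx2 : y + xv = nf t p (n + ∑ i, k1 i) (fun i => (a + xf) i - (p i : ℤ) * k1 i) := by
    rw [hyx, ← nf_carry t p n (a + xf) k1]
  have hnormal1 : ∀ i, 0 ≤ (a + xf) i - (p i : ℤ) * k1 i ∧
      (a + xf) i - (p i : ℤ) * k1 i ≤ (p i : ℤ) - 1 := by
    intro i
    have hai := ha i
    have hpi := hpz i
    simp only [Pi.add_apply]
    by_cases hiI : i ∈ I
    · have hli := hl i hiI
      rw [hxfI i hiI]
      by_cases hc : (p i : ℤ) ≤ a i + l i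
      · rw [hk1pos i (Or.inl ⟨hiI, hc⟩)]; omega
      · rw [hk1neg i (by rintro (⟨_, h⟩ | ⟨h, _⟩); exacts [hc h, h hiI])]; omega
    · rw [hxfC i hiI]
      by_cases hc : 1 ≤ a i
      · rw [hk1pos i (Or.inr ⟨hiI, hc⟩)]; omega
      · rw [hk1neg i (by rintro (⟨h, _⟩ | ⟨_, h⟩); exacts [hiI h, hc h])]; omega
  -- positivity conclusions for y + xv
  have h1' : (0 : ℤ) ≤ n + ∑ i, k1 i := by
    rw [hyx2] at h1
    exact (pos_nf_iff t p hp _ _ hnormal1).mp h1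
  have h2' : ¬ (0 : ℤ) ≤ n + ∑ i, k1 i - 1 := by
    intro hcontra
    apply h2
    rw [hyx2, nf_sub_cg]
    exact (pos_nf_iff t p hp _ _ hnormal1).mpr hcontra
  -- compute ∑ k1
  set S : ℕ := (Iᶜ.filter (fun j => 1 ≤ a j)).card with hS
  have hsumk1 : ∑ i, k1 i = (mI : ℤ) + (S : ℤ) := by
    rw [hk1, Finset.sum_boole]
    have hsplit : univ.filter cond
        = I.filter (fun i => (p i : ℤ) ≤ a i + l i) ∪ Iᶜ.filter (fun j => 1 ≤ a j) := by
      ext i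
      by_cases hiI : i ∈ I <;> simp [hcond, mem_compl, hiI]
    rw [hsplit, Finset.card_union_of_disjoint
      (Finset.disjoint_filter_filter disjoint_compl_right)]
    push_cast [hmI, hS]
    ring
  -- y + wg
  set negone : Fin t → ℤ := fun _ => (-1 : ℤ) with hnegone
  have hw : wg t p = nf t p ((t : ℤ) - 2) negone := by
    rw [wg, nf, sub_eq_add_neg]
    congr 1
    rw [← Finset.sum_neg_distrib]
    exact Finset.sum_congr rfl fun i _ => by
      show -(xg t p i) = (-1 : ℤ) • xg t p i
      rw [neg_smul, one_smul]
  have hyw : y + wg t p = nf t p (n + ((t : ℤ) - 2)) (a + negone) := by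
    rw [hy', hw, nf_add]
  set k2 : Fin t → ℤ := fun i => if a i = 0 then (-1 : ℤ) else 0 with hk2
  have hk2pos : ∀ i, a i = 0 → k2 i = -1 := by
    intro i hc
    show (if a i = 0 then (-1 : ℤ) else 0) = -1
    rw [if_pos hc]
  have hk2neg : ∀ i, ¬ a i = 0 → k2 i = 0 := by
    intro i hc
    show (if a i = 0 then (-1 : ℤ) else 0) = 0
    rw [if_neg hc]
  have hyw2 : y + wg t p = nf t p ((n + ((t : ℤ) - 2)) + ∑ i, k2 i)
      (fun i => (a + negone) i - (p i : ℤ) * k2 i) := by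
    rw [hyw, ← nf_carry t p (n + ((t : ℤ) - 2)) (a + negone) k2]
  have hnormal2 : ∀ i, 0 ≤ (a + negone) i - (p i : ℤ) * k2 i ∧
      (a + negone) i - (p i : ℤ) * k2 i ≤ (p i : ℤ) - 1 := by
    intro i
    have hai := ha i
    have hpi := hpz i
    simp only [Pi.add_apply]
    have hn1 : negone i = -1 := rfl
    rw [hn1]
    by_cases hc : a i = 0
    · rw [hk2pos i hc]; omega
    · rw [hk2neg i hc]; omega
  have h3' : (0 : ℤ) ≤ (n + ((t : ℤ) - 2)) + ∑ i, k2 i := by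
    rw [hyw2] at h3
    exact (pos_nf_iff t p hp _ _ hnormal2).mp h3
  -- compute ∑ k2
  set ZI : ℕ := (I.filter (fun i => a i = 0)).card with hZI
  set ZC : ℕ := (Iᶜ.filter (fun i => a i = 0)).card with hZC
  have hsumk2 : ∑ i, k2 i = -((ZI : ℤ) + (ZC : ℤ)) := by
    rw [hk2]
    have e : ∀ i, (if a i = 0 then (-1 : ℤ) else 0) = -(if a i = 0 then (1 : ℤ) else 0) := by
      intro i; split_ifs <;> ring
    simp_rw [e]
    rw [Finset.sum_neg_distrib, Finset.sum_boole]
    have hsplit : univ.filter (fun i => a i = 0)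
        = I.filter (fun i => a i = 0) ∪ Iᶜ.filter (fun i => a i = 0) := by
      ext i
      simp only [mem_filter, mem_union, mem_univ, true_and, mem_compl]
      tauto
    rw [hsplit, Finset.card_union_of_disjoint
      (Finset.disjoint_filter_filter disjoint_compl_right)]
    push_cast [hZI, hZC]
    ring
  -- counting identities
  have hcompl : S + ZC = Iᶜ.card := by
    rw [hS, hZC]
    have h := Finset.card_filter_add_card_filter_not
      (s := Iᶜ) (p := fun j => a j = 0)
    rw [Finset.filter_congr (show ∀ j ∈ Iᶜ, (¬ a j = 0) ↔ (1 ≤ a j) from fun j _ => by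
      have := (ha j).1
      constructor <;> intro <;> omega)] at h
    omega
  have hIc : I.card + Iᶜ.card = t := by
    rw [Finset.card_add_card_compl, Fintype.card_fin]
  -- final arithmetic
  rw [hsumk1] at h1' h2'
  rw [hsumk2] at h3'
  have key : mI + ZI ≤ 1 := by omega
  refine ⟨key, by omega, ?_, by omega⟩
  intro hm i hi
  have hz : ZI = 0 := by omega
  by_contra hcon
  push_neg at hcon
  have hai0 : a i = 0 := le_antisymm hcon (ha i).1
  have hmem : i ∈ I.filter (fun i => a i = 0) := Finset.mem_filter.mpr ⟨hi, hai0⟩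
  have hempty : I.filter (fun i => a i = 0) = ∅ := by
    apply Finset.card_eq_zero.mp
    rw [← hZI]; exact hz
  rw [hempty] at hmem
  exact absurd hmem (Finset.notMem_empty i)
end
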